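/- arXiv:1501.01557 — 6 statements merged into one kernel-verified Lean document; each statement's English description precedes it below -/
import Mathlib

section
/- With R, c1, x1, x2 and the functions NA1, NPA2, NPA3 as in the context, one has NPA3(0,0,0,0) = 50c1^2 + 64c1x1 + 17x1^2 + 5x2. (This is the formula of Theorem 1.3 for N(A3): the number of curves in the linear system of a sufficiently 4-ample line bundle L on a compact complex surface X that pass through δ_L − 3 generic points and have an A3-singularity (tacnode), where c1 = c1(L), x1 = c1(T*X), x2 = c2(T*X), and N(A3) = NPA3(0,0,0,0).) -/
theorem stmt_1_general {R : Type*} [CommRing R] (c1 x1 x2 : R)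
    (NA1 : ℕ → ℕ → ℕ → R)
    (hNA1_000 : NA1 0 0 0 = 3*c1^2 + 2*c1*x1 + x2)
    (hNA1_100 : NA1 1 0 0 = 3*c1^2 + c1*x1)
    (hNA1_200 : NA1 2 0 0 = c1^2)
    (hNA1_010 : NA1 0 1 0 = 3*c1*x1 + x1^2)
    (hNA1_110 : NA1 1 1 0 = c1*x1)
    (hNA1_020 : NA1 0 2 0 = x1^2)
    (NPA2 : ℕ → ℕ → ℕ → ℕ → R)
    (hNPA2_0 : ∀ n1 m1 m2 : ℕ, NPA2 n1 m1 m2 0 =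
      2*NA1 n1 m1 m2 + 2*NA1 n1 (m1+1) m2 + 2*NA1 (n1+1) m1 m2)
    (hNPA2_1 : ∀ n1 m1 m2 : ℕ, NPA2 n1 m1 m2 1 =
      NA1 n1 m1 m2 + 2*NA1 (n1+1) m1 m2 + NA1 (n1+2) m1 m2
      + 3*NA1 n1 (m1+1) m2 + 3*NA1 (n1+1) (m1+1) m2 + 2*NA1 n1 (m1+2) m2)
    (NPA3 : ℕ → ℕ → ℕ → ℕ → R)
    (hNPA3 : ∀ n1 m1 m2 θ : ℕ, NPA3 n1 m1 m2 θ =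
      3*NPA2 n1 m1 m2 (θ+1) + NPA2 n1 m1 m2 θ + NPA2 (n1+1) m1 m2 θ)
    : NPA3 0 0 0 0 = 50*c1^2 + 64*c1*x1 + 17*x1^2 + 5*x2 := by
  rw [hNPA3, hNPA2_1, hNPA2_0, hNPA2_0, hNA1_000, hNA1_100, hNA1_200,
    hNA1_010, hNA1_110, hNA1_020]
  ring

theorem stmt_1 {R : Type*} [CommRing R] [Algebra ℚ R] (c1 x1 x2 : R)
    (NA1 : ℕ → ℕ → ℕ → R)
    (hNA1_000 : NA1 0 0 0 = 3*c1^2 + 2*c1*x1 + x2)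
    (hNA1_100 : NA1 1 0 0 = 3*c1^2 + c1*x1)
    (hNA1_200 : NA1 2 0 0 = c1^2)
    (hNA1_010 : NA1 0 1 0 = 3*c1*x1 + x1^2)
    (hNA1_110 : NA1 1 1 0 = c1*x1)
    (hNA1_020 : NA1 0 2 0 = x1^2)
    (hNA1_001 : NA1 0 0 1 = x2)
    (hNA1_other : ∀ n1 m1 m2 : ℕ,
      (n1, m1, m2) ∉ ({(0,0,0), (1,0,0), (2,0,0), (0,1,0), (1,1,0), (0,2,0), (0,0,1)} :
        Set (ℕ × ℕ × ℕ)) → NA1 n1 m1 m2 = 0)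
    (NPA2 : ℕ → ℕ → ℕ → ℕ → R)
    (hNPA2_0 : ∀ n1 m1 m2 : ℕ, NPA2 n1 m1 m2 0 =
      2*NA1 n1 m1 m2 + 2*NA1 n1 (m1+1) m2 + 2*NA1 (n1+1) m1 m2)
    (hNPA2_1 : ∀ n1 m1 m2 : ℕ, NPA2 n1 m1 m2 1 =
      NA1 n1 m1 m2 + 2*NA1 (n1+1) m1 m2 + NA1 (n1+2) m1 m2
      + 3*NA1 n1 (m1+1) m2 + 3*NA1 (n1+1) (m1+1) m2 + 2*NA1 n1 (m1+2) m2)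
    (hNPA2_rec : ∀ n1 m1 m2 θ : ℕ, NPA2 n1 m1 m2 (θ+2) =
      NPA2 n1 (m1+1) m2 (θ+1) - NPA2 n1 m1 (m2+1) θ)
    (NPA3 : ℕ → ℕ → ℕ → ℕ → R)
    (hNPA3 : ∀ n1 m1 m2 θ : ℕ, NPA3 n1 m1 m2 θ =
      3*NPA2 n1 m1 m2 (θ+1) + NPA2 n1 m1 m2 θ + NPA2 (n1+1) m1 m2 θ)
    : NPA3 0 0 0 0 = 50*c1^2 + 64*c1*x1 + 17*x1^2 + 5*x2 :=
  stmt_1_general c1 x1 x2 NA1 hNA1_000 hNA1_100 hNA1_200 hNA1_010 hNA1_110 hNA1_020 NPA2 hNPA2_0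
    hNPA2_1 NPA3 hNPA3
end

section
/- With R, c1, x1, x2 and the functions NA1, NPA2, NPA3, NPA4 as in the context, one has NPA4(0,0,0,0) = 180c1^2 + 280c1x1 + 100x1^2. (This is the formula of Theorem 1.3 for N(A4): the number of curves in the linear system of a sufficiently 5-ample line bundle L on a compact complex surface X that pass through δ_L − 4 generic points and have an A4-singularity, where c1 = c1(L), x1 = c1(T*X), x2 = c2(T*X), and N(A4) = NPA4(0,0,0,0).) -/
/-- The triples listed in `hNA1_other` are exactly those of weight `n + m + 2 * p ≤ 2`. -/
theorem na1_eq_zero_of_two_lt_weight {R : Type*} [Zero R] (NA1 : ℕ → ℕ → ℕ → R)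
    (hNA1_other : ∀ n1 m1 m2 : ℕ,
      (n1, m1, m2) ∉ ({(0,0,0), (1,0,0), (2,0,0), (0,1,0), (1,1,0), (0,2,0), (0,0,1)} :
        Set (ℕ × ℕ × ℕ)) → NA1 n1 m1 m2 = 0)
    (n m p : ℕ) (h : 2 < n + m + 2 * p) : NA1 n m p = 0 := by
  apply hNA1_other
  simp only [Set.mem_insert_iff, Set.mem_singleton_iff, Prod.mk.injEq]
  omega

theorem stmt_2_general {R : Type*} [CommRing R] (c1 x1 x2 : R)
    (NA1 : ℕ → ℕ → ℕ → R)
    (hNA1_000 : NA1 0 0 0 = 3*c1^2 + 2*c1*x1 + x2)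
    (hNA1_100 : NA1 1 0 0 = 3*c1^2 + c1*x1)
    (hNA1_200 : NA1 2 0 0 = c1^2)
    (hNA1_010 : NA1 0 1 0 = 3*c1*x1 + x1^2)
    (hNA1_110 : NA1 1 1 0 = c1*x1)
    (hNA1_020 : NA1 0 2 0 = x1^2)
    (hNA1_001 : NA1 0 0 1 = x2)
    (hNA1_other : ∀ n1 m1 m2 : ℕ,
      (n1, m1, m2) ∉ ({(0,0,0), (1,0,0), (2,0,0), (0,1,0), (1,1,0), (0,2,0), (0,0,1)} :
        Set (ℕ × ℕ × ℕ)) → NA1 n1 m1 m2 = 0)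
    (NPA2 : ℕ → ℕ → ℕ → ℕ → R)
    (hNPA2_0 : ∀ n1 m1 m2 : ℕ, NPA2 n1 m1 m2 0 =
      2*NA1 n1 m1 m2 + 2*NA1 n1 (m1+1) m2 + 2*NA1 (n1+1) m1 m2)
    (hNPA2_1 : ∀ n1 m1 m2 : ℕ, NPA2 n1 m1 m2 1 =
      NA1 n1 m1 m2 + 2*NA1 (n1+1) m1 m2 + NA1 (n1+2) m1 m2
      + 3*NA1 n1 (m1+1) m2 + 3*NA1 (n1+1) (m1+1) m2 + 2*NA1 n1 (m1+2) m2)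
    (hNPA2_rec : ∀ n1 m1 m2 θ : ℕ, NPA2 n1 m1 m2 (θ+2) =
      NPA2 n1 (m1+1) m2 (θ+1) - NPA2 n1 m1 (m2+1) θ)
    (NPA3 : ℕ → ℕ → ℕ → ℕ → R)
    (hNPA3 : ∀ n1 m1 m2 θ : ℕ, NPA3 n1 m1 m2 θ =
      3*NPA2 n1 m1 m2 (θ+1) + NPA2 n1 m1 m2 θ + NPA2 (n1+1) m1 m2 θ)
    (NPA4 : ℕ → ℕ → ℕ → ℕ → R)
    (hNPA4 : ∀ n1 m1 m2 θ : ℕ, NPA4 n1 m1 m2 θ =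
      2*NPA3 n1 m1 m2 (θ+1) + 2*NPA3 n1 (m1+1) m2 θ
      + 2*NPA3 n1 m1 m2 θ + 2*NPA3 (n1+1) m1 m2 θ)
    : NPA4 0 0 0 0 = 180*c1^2 + 280*c1*x1 + 100*x1^2 := by
  simp (disch := omega) only [hNPA4, hNPA3, Nat.reduceAdd, hNPA2_rec 0 0 0 0, hNPA2_1, hNPA2_0,
    hNA1_000, hNA1_100, hNA1_200, hNA1_010, hNA1_110, hNA1_020, hNA1_001,
    na1_eq_zero_of_two_lt_weight NA1 hNA1_other]
  ring

theorem stmt_2 {R : Type*} [CommRing R] [Algebra ℚ R] (c1 x1 x2 : R)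
    (NA1 : ℕ → ℕ → ℕ → R)
    (hNA1_000 : NA1 0 0 0 = 3*c1^2 + 2*c1*x1 + x2)
    (hNA1_100 : NA1 1 0 0 = 3*c1^2 + c1*x1)
    (hNA1_200 : NA1 2 0 0 = c1^2)
    (hNA1_010 : NA1 0 1 0 = 3*c1*x1 + x1^2)
    (hNA1_110 : NA1 1 1 0 = c1*x1)
    (hNA1_020 : NA1 0 2 0 = x1^2)
    (hNA1_001 : NA1 0 0 1 = x2)
    (hNA1_other : ∀ n1 m1 m2 : ℕ,
      (n1, m1, m2) ∉ ({(0,0,0), (1,0,0), (2,0,0), (0,1,0), (1,1,0), (0,2,0), (0,0,1)} :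
        Set (ℕ × ℕ × ℕ)) → NA1 n1 m1 m2 = 0)
    (NPA2 : ℕ → ℕ → ℕ → ℕ → R)
    (hNPA2_0 : ∀ n1 m1 m2 : ℕ, NPA2 n1 m1 m2 0 =
      2*NA1 n1 m1 m2 + 2*NA1 n1 (m1+1) m2 + 2*NA1 (n1+1) m1 m2)
    (hNPA2_1 : ∀ n1 m1 m2 : ℕ, NPA2 n1 m1 m2 1 =
      NA1 n1 m1 m2 + 2*NA1 (n1+1) m1 m2 + NA1 (n1+2) m1 m2
      + 3*NA1 n1 (m1+1) m2 + 3*NA1 (n1+1) (m1+1) m2 + 2*NA1 n1 (m1+2) m2)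
    (hNPA2_rec : ∀ n1 m1 m2 θ : ℕ, NPA2 n1 m1 m2 (θ+2) =
      NPA2 n1 (m1+1) m2 (θ+1) - NPA2 n1 m1 (m2+1) θ)
    (NPA3 : ℕ → ℕ → ℕ → ℕ → R)
    (hNPA3 : ∀ n1 m1 m2 θ : ℕ, NPA3 n1 m1 m2 θ =
      3*NPA2 n1 m1 m2 (θ+1) + NPA2 n1 m1 m2 θ + NPA2 (n1+1) m1 m2 θ)
    (NPA4 : ℕ → ℕ → ℕ → ℕ → R)
    (hNPA4 : ∀ n1 m1 m2 θ : ℕ, NPA4 n1 m1 m2 θ =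
      2*NPA3 n1 m1 m2 (θ+1) + 2*NPA3 n1 (m1+1) m2 θ
      + 2*NPA3 n1 m1 m2 θ + 2*NPA3 (n1+1) m1 m2 θ)
    : NPA4 0 0 0 0 = 180*c1^2 + 280*c1*x1 + 100*x1^2 :=
  stmt_2_general c1 x1 x2 NA1 hNA1_000 hNA1_100 hNA1_200 hNA1_010 hNA1_110 hNA1_020 hNA1_001
    hNA1_other NPA2 hNPA2_0 hNPA2_1 hNPA2_rec NPA3 hNPA3 NPA4 hNPA4
end

section
/- With R, c1, x1, x2 and the functions NA1, NPA2, NPA3, NPA4, NPD4, NPD5, NPA5 as in the context, one has NPA5(0,0,0,0) = 630c1^2 + 1140c1x1 + 498x1^2 − 60x2. (This is the formula of Theorem 1.3 for N(A5): the number of curves in the linear system of a sufficiently 6-ample line bundle L on a compact complex surface X that pass through δ_L − 5 generic points and have an A5-singularity, where c1 = c1(L), x1 = c1(T*X), x2 = c2(T*X), and N(A5) = NPA5(0,0,0,0).) -/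
/-!
Every number in the statement is a ℤ-linear combination of values of `NA1`: the
θ-recursion of `NPA2` descends to θ ≤ 1, so unfolding all definitions leaves `NA1` at
finitely many triples, where it is one of the seven listed classes or zero.
-/

theorem stmt_3_general {R : Type*} [CommRing R] (c1 x1 x2 : R)
    (NA1 : ℕ → ℕ → ℕ → R)
    (hNA1_000 : NA1 0 0 0 = 3*c1^2 + 2*c1*x1 + x2)
    (hNA1_100 : NA1 1 0 0 = 3*c1^2 + c1*x1)
    (hNA1_200 : NA1 2 0 0 = c1^2)
    (hNA1_010 : NA1 0 1 0 = 3*c1*x1 + x1^2)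
    (hNA1_110 : NA1 1 1 0 = c1*x1)
    (hNA1_020 : NA1 0 2 0 = x1^2)
    (hNA1_001 : NA1 0 0 1 = x2)
    (hNA1_other : ∀ n1 m1 m2 : ℕ,
      (n1, m1, m2) ∉ ({(0,0,0), (1,0,0), (2,0,0), (0,1,0), (1,1,0), (0,2,0), (0,0,1)} :
        Set (ℕ × ℕ × ℕ)) → NA1 n1 m1 m2 = 0)
    (NPA2 : ℕ → ℕ → ℕ → ℕ → R)
    (hNPA2_0 : ∀ n1 m1 m2 : ℕ, NPA2 n1 m1 m2 0 =
      2*NA1 n1 m1 m2 + 2*NA1 n1 (m1+1) m2 + 2*NA1 (n1+1) m1 m2)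
    (hNPA2_1 : ∀ n1 m1 m2 : ℕ, NPA2 n1 m1 m2 1 =
      NA1 n1 m1 m2 + 2*NA1 (n1+1) m1 m2 + NA1 (n1+2) m1 m2
      + 3*NA1 n1 (m1+1) m2 + 3*NA1 (n1+1) (m1+1) m2 + 2*NA1 n1 (m1+2) m2)
    (hNPA2_rec : ∀ n1 m1 m2 θ : ℕ, NPA2 n1 m1 m2 (θ+2) =
      NPA2 n1 (m1+1) m2 (θ+1) - NPA2 n1 m1 (m2+1) θ)
    (NPA3 : ℕ → ℕ → ℕ → ℕ → R)
    (hNPA3 : ∀ n1 m1 m2 θ : ℕ, NPA3 n1 m1 m2 θ =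
      3*NPA2 n1 m1 m2 (θ+1) + NPA2 n1 m1 m2 θ + NPA2 (n1+1) m1 m2 θ)
    (NPA4 : ℕ → ℕ → ℕ → ℕ → R)
    (hNPA4 : ∀ n1 m1 m2 θ : ℕ, NPA4 n1 m1 m2 θ =
      2*NPA3 n1 m1 m2 (θ+1) + 2*NPA3 n1 (m1+1) m2 θ
      + 2*NPA3 n1 m1 m2 θ + 2*NPA3 (n1+1) m1 m2 θ)
    (NPD4 : ℕ → ℕ → ℕ → ℕ → R)
    (hNPD4 : ∀ n1 m1 m2 θ : ℕ, NPD4 n1 m1 m2 θ =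
      2*NPA3 n1 (m1+1) m2 θ - 2*NPA3 n1 m1 m2 (θ+1)
      + NPA3 n1 m1 m2 θ + NPA3 (n1+1) m1 m2 θ)
    (NPD5 : ℕ → ℕ → ℕ → ℕ → R)
    (hNPD5 : ∀ n1 m1 m2 θ : ℕ, NPD5 n1 m1 m2 θ =
      NPD4 n1 m1 m2 (θ+1) + NPD4 n1 (m1+1) m2 θ
      + NPD4 n1 m1 m2 θ + NPD4 (n1+1) m1 m2 θ)
    (NPA5 : ℕ → ℕ → ℕ → ℕ → R)
    (hNPA5 : ∀ n1 m1 m2 θ : ℕ, NPA5 n1 m1 m2 θ =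
      NPA4 n1 m1 m2 (θ+1) + 4*NPA4 n1 (m1+1) m2 θ
      + 3*NPA4 n1 m1 m2 θ + 3*NPA4 (n1+1) m1 m2 θ - 2*NPD5 n1 m1 m2 θ)
    : NPA5 0 0 0 0 = 630*c1^2 + 1140*c1*x1 + 498*x1^2 - 60*x2 := by
  obtain ⟨hPA4_0001, hPA4_0100, hPA4_0000, hPA4_1000, hPD5_0000⟩ :
      NPA4 0 0 0 1 = 42*c1^2 + 108*c1*x1 + 62*x1^2 - 20*x2 ∧
      NPA4 0 1 0 0 = 72*c1*x1 + 56*x1^2 ∧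
      NPA4 0 0 0 0 = 180*c1^2 + 280*c1*x1 + 100*x1^2 ∧
      NPA4 1 0 0 0 = 72*c1^2 + 56*c1*x1 ∧
      NPD5 0 0 0 0 = 84*c1^2 + 132*c1*x1 + 44*x1^2 + 20*x2 := by
    refine ⟨?_, ?_, ?_, ?_, ?_⟩ <;>
    · simp only [hNPD5, hNPA4, hNPD4, hNPA3, hNPA2_rec, hNPA2_1, hNPA2_0, Nat.reduceAdd]
      simp (disch := simp) only [hNA1_000, hNA1_100, hNA1_200, hNA1_010, hNA1_110, hNA1_020,
        hNA1_001, hNA1_other]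
      ring
  rw [hNPA5, hPA4_0001, hPA4_0100, hPA4_0000, hPA4_1000, hPD5_0000]
  ring

theorem stmt_3 {R : Type*} [CommRing R] [Algebra ℚ R] (c1 x1 x2 : R)
    (NA1 : ℕ → ℕ → ℕ → R)
    (hNA1_000 : NA1 0 0 0 = 3*c1^2 + 2*c1*x1 + x2)
    (hNA1_100 : NA1 1 0 0 = 3*c1^2 + c1*x1)
    (hNA1_200 : NA1 2 0 0 = c1^2)
    (hNA1_010 : NA1 0 1 0 = 3*c1*x1 + x1^2)
    (hNA1_110 : NA1 1 1 0 = c1*x1)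
    (hNA1_020 : NA1 0 2 0 = x1^2)
    (hNA1_001 : NA1 0 0 1 = x2)
    (hNA1_other : ∀ n1 m1 m2 : ℕ,
      (n1, m1, m2) ∉ ({(0,0,0), (1,0,0), (2,0,0), (0,1,0), (1,1,0), (0,2,0), (0,0,1)} :
        Set (ℕ × ℕ × ℕ)) → NA1 n1 m1 m2 = 0)
    (NPA2 : ℕ → ℕ → ℕ → ℕ → R)
    (hNPA2_0 : ∀ n1 m1 m2 : ℕ, NPA2 n1 m1 m2 0 =
      2*NA1 n1 m1 m2 + 2*NA1 n1 (m1+1) m2 + 2*NA1 (n1+1) m1 m2)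
    (hNPA2_1 : ∀ n1 m1 m2 : ℕ, NPA2 n1 m1 m2 1 =
      NA1 n1 m1 m2 + 2*NA1 (n1+1) m1 m2 + NA1 (n1+2) m1 m2
      + 3*NA1 n1 (m1+1) m2 + 3*NA1 (n1+1) (m1+1) m2 + 2*NA1 n1 (m1+2) m2)
    (hNPA2_rec : ∀ n1 m1 m2 θ : ℕ, NPA2 n1 m1 m2 (θ+2) =
      NPA2 n1 (m1+1) m2 (θ+1) - NPA2 n1 m1 (m2+1) θ)
    (NPA3 : ℕ → ℕ → ℕ → ℕ → R)
    (hNPA3 : ∀ n1 m1 m2 θ : ℕ, NPA3 n1 m1 m2 θ =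
      3*NPA2 n1 m1 m2 (θ+1) + NPA2 n1 m1 m2 θ + NPA2 (n1+1) m1 m2 θ)
    (NPA4 : ℕ → ℕ → ℕ → ℕ → R)
    (hNPA4 : ∀ n1 m1 m2 θ : ℕ, NPA4 n1 m1 m2 θ =
      2*NPA3 n1 m1 m2 (θ+1) + 2*NPA3 n1 (m1+1) m2 θ
      + 2*NPA3 n1 m1 m2 θ + 2*NPA3 (n1+1) m1 m2 θ)
    (NPD4 : ℕ → ℕ → ℕ → ℕ → R)
    (hNPD4 : ∀ n1 m1 m2 θ : ℕ, NPD4 n1 m1 m2 θ =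
      2*NPA3 n1 (m1+1) m2 θ - 2*NPA3 n1 m1 m2 (θ+1)
      + NPA3 n1 m1 m2 θ + NPA3 (n1+1) m1 m2 θ)
    (NPD5 : ℕ → ℕ → ℕ → ℕ → R)
    (hNPD5 : ∀ n1 m1 m2 θ : ℕ, NPD5 n1 m1 m2 θ =
      NPD4 n1 m1 m2 (θ+1) + NPD4 n1 (m1+1) m2 θ
      + NPD4 n1 m1 m2 θ + NPD4 (n1+1) m1 m2 θ)
    (NPA5 : ℕ → ℕ → ℕ → ℕ → R)
    (hNPA5 : ∀ n1 m1 m2 θ : ℕ, NPA5 n1 m1 m2 θ =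
      NPA4 n1 m1 m2 (θ+1) + 4*NPA4 n1 (m1+1) m2 θ
      + 3*NPA4 n1 m1 m2 θ + 3*NPA4 (n1+1) m1 m2 θ - 2*NPD5 n1 m1 m2 θ)
    : NPA5 0 0 0 0 = 630*c1^2 + 1140*c1*x1 + 498*x1^2 - 60*x2 :=
  stmt_3_general c1 x1 x2 NA1 hNA1_000 hNA1_100 hNA1_200 hNA1_010 hNA1_110 hNA1_020 hNA1_001
    hNA1_other NPA2 hNPA2_0 hNPA2_1 hNPA2_rec NPA3 hNPA3 NPA4 hNPA4 NPD4 hNPD4 NPD5 hNPD5 NPA5 hNPA5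
end

section
/- With R, c1, x1, x2 and the functions NA1, NPA2, NPA3, NPD4, NPD5, NPE6, NPE7 as in the context, one has NPE7(0,0,0,0) = 252c1^2 + 488c1x1 + 217x1^2 + 42x2. (This is the formula of Theorem 1.3 for N(E7): the number of curves in the linear system of a sufficiently 4-ample line bundle L on a compact complex surface X that pass through δ_L − 6 generic points and have an E7-singularity, where c1 = c1(L), x1 = c1(T*X), x2 = c2(T*X), and N(E7) = NPE7(0,0,0,0).) -/
/-!
Read `NA1 n1 m1 m2` as the degree-2 part of `c1^n1 x1^m1 x2^m2` against a fixed class, with `x2`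
of degree 2: it vanishes as soon as `n1 + m1 + 2 m2 > 2`. `NPA2` lives one dimension higher, on
`P(TX)`, where `θ` is the power of a tautological class `y` with `y² = x1 y - x2`; so it vanishes
once `n1 + m1 + 2 m2 + θ > 3`. All later recursions only raise indices, hence unfolding
`NPE7 0 0 0 0` down to `NA1` leaves finitely many nonzero terms, and their sum is the formula.
-/

lemma add_add_two_mul_le_two_of_mem {n m k : ℕ}
    (h : (n, m, k) ∈ ({(0,0,0), (1,0,0), (2,0,0), (0,1,0), (1,1,0), (0,2,0), (0,0,1)} :
      Set (ℕ × ℕ × ℕ))) :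
    n + m + 2 * k ≤ 2 := by
  simp only [Set.mem_insert_iff, Set.mem_singleton_iff, Prod.mk.injEq] at h
  omega

lemma eq_zero_of_three_lt_of_rec {M : Type*} [AddGroup M] {F : ℕ → ℕ → ℕ → ℕ → M}
    (hbase : ∀ n m k θ, θ ≤ 1 → 2 < n + m + 2 * k → F n m k θ = 0)
    (hrec : ∀ n m k θ, F n m k (θ + 2) = F n (m + 1) k (θ + 1) - F n m (k + 1) θ) :
    ∀ θ n m k, 3 < n + m + 2 * k + θ → F n m k θ = 0
  | 0, n, m, k, h => hbase n m k 0 zero_le_one (by omega)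
  | 1, n, m, k, h => hbase n m k 1 le_rfl (by omega)
  | θ + 2, n, m, k, h => by
    rw [hrec, eq_zero_of_three_lt_of_rec hbase hrec (θ + 1) n (m + 1) k (by omega),
      eq_zero_of_three_lt_of_rec hbase hrec θ n m (k + 1) (by omega), sub_zero]

theorem stmt_11_general {R : Type*} [CommRing R] (c1 x1 x2 : R)
    (NA1 : ℕ → ℕ → ℕ → R)
    (hNA1_000 : NA1 0 0 0 = 3*c1^2 + 2*c1*x1 + x2)
    (hNA1_100 : NA1 1 0 0 = 3*c1^2 + c1*x1)
    (hNA1_200 : NA1 2 0 0 = c1^2)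
    (hNA1_010 : NA1 0 1 0 = 3*c1*x1 + x1^2)
    (hNA1_110 : NA1 1 1 0 = c1*x1)
    (hNA1_020 : NA1 0 2 0 = x1^2)
    (hNA1_001 : NA1 0 0 1 = x2)
    (hNA1_other : ∀ n1 m1 m2 : ℕ,
      (n1, m1, m2) ∉ ({(0,0,0), (1,0,0), (2,0,0), (0,1,0), (1,1,0), (0,2,0), (0,0,1)} :
        Set (ℕ × ℕ × ℕ)) → NA1 n1 m1 m2 = 0)
    (NPA2 : ℕ → ℕ → ℕ → ℕ → R)
    (hNPA2_0 : ∀ n1 m1 m2 : ℕ, NPA2 n1 m1 m2 0 =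
      2*NA1 n1 m1 m2 + 2*NA1 n1 (m1+1) m2 + 2*NA1 (n1+1) m1 m2)
    (hNPA2_1 : ∀ n1 m1 m2 : ℕ, NPA2 n1 m1 m2 1 =
      NA1 n1 m1 m2 + 2*NA1 (n1+1) m1 m2 + NA1 (n1+2) m1 m2
      + 3*NA1 n1 (m1+1) m2 + 3*NA1 (n1+1) (m1+1) m2 + 2*NA1 n1 (m1+2) m2)
    (hNPA2_rec : ∀ n1 m1 m2 θ : ℕ, NPA2 n1 m1 m2 (θ+2) =
      NPA2 n1 (m1+1) m2 (θ+1) - NPA2 n1 m1 (m2+1) θ)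
    (NPA3 : ℕ → ℕ → ℕ → ℕ → R)
    (hNPA3 : ∀ n1 m1 m2 θ : ℕ, NPA3 n1 m1 m2 θ =
      3*NPA2 n1 m1 m2 (θ+1) + NPA2 n1 m1 m2 θ + NPA2 (n1+1) m1 m2 θ)
    (NPD4 : ℕ → ℕ → ℕ → ℕ → R)
    (hNPD4 : ∀ n1 m1 m2 θ : ℕ, NPD4 n1 m1 m2 θ =
      2*NPA3 n1 (m1+1) m2 θ - 2*NPA3 n1 m1 m2 (θ+1)
      + NPA3 n1 m1 m2 θ + NPA3 (n1+1) m1 m2 θ)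
    (NPD5 : ℕ → ℕ → ℕ → ℕ → R)
    (hNPD5 : ∀ n1 m1 m2 θ : ℕ, NPD5 n1 m1 m2 θ =
      NPD4 n1 m1 m2 (θ+1) + NPD4 n1 (m1+1) m2 θ
      + NPD4 n1 m1 m2 θ + NPD4 (n1+1) m1 m2 θ)
    (NPE6 : ℕ → ℕ → ℕ → ℕ → R)
    (hNPE6 : ∀ n1 m1 m2 θ : ℕ, NPE6 n1 m1 m2 θ =
      2*NPD5 n1 (m1+1) m2 θ - NPD5 n1 m1 m2 (θ+1)
      + NPD5 (n1+1) m1 m2 θ + NPD5 n1 m1 m2 θ)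
    (NPE7 : ℕ → ℕ → ℕ → ℕ → R)
    (hNPE7 : ∀ n1 m1 m2 θ : ℕ, NPE7 n1 m1 m2 θ =
      4*NPE6 n1 m1 m2 (θ+1) + NPE6 n1 m1 m2 θ + NPE6 (n1+1) m1 m2 θ)
    : NPE7 0 0 0 0 = 252*c1^2 + 488*c1*x1 + 217*x1^2 + 42*x2 := by
  have hNA1_zero : ∀ n m k, 2 < n + m + 2 * k → NA1 n m k = 0 := fun n m k hw =>
    hNA1_other n m k fun hmem => (add_add_two_mul_le_two_of_mem hmem).not_gt hw
  have hNPA2_zero : ∀ θ n m k, 3 < n + m + 2 * k + θ → NPA2 n m k θ = 0 := by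
    refine eq_zero_of_three_lt_of_rec (fun n m k θ hθ hw => ?_) hNPA2_rec
    obtain rfl | rfl : θ = 0 ∨ θ = 1 := by omega
    · simp (disch := omega) only [hNPA2_0, hNA1_zero, mul_zero, add_zero]
    · simp (disch := omega) only [hNPA2_1, hNA1_zero, mul_zero, add_zero]
  simp (disch := decide) only [hNPE7, hNPE6, hNPD5, hNPD4, hNPA3, hNPA2_zero, hNPA2_rec,
    hNPA2_1, hNPA2_0, hNA1_zero, hNA1_000, hNA1_100, hNA1_200, hNA1_010, hNA1_110, hNA1_020,
    hNA1_001]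
  ring

theorem stmt_11 {R : Type*} [CommRing R] [Algebra ℚ R] (c1 x1 x2 : R)
    (NA1 : ℕ → ℕ → ℕ → R)
    (hNA1_000 : NA1 0 0 0 = 3*c1^2 + 2*c1*x1 + x2)
    (hNA1_100 : NA1 1 0 0 = 3*c1^2 + c1*x1)
    (hNA1_200 : NA1 2 0 0 = c1^2)
    (hNA1_010 : NA1 0 1 0 = 3*c1*x1 + x1^2)
    (hNA1_110 : NA1 1 1 0 = c1*x1)
    (hNA1_020 : NA1 0 2 0 = x1^2)
    (hNA1_001 : NA1 0 0 1 = x2)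
    (hNA1_other : ∀ n1 m1 m2 : ℕ,
      (n1, m1, m2) ∉ ({(0,0,0), (1,0,0), (2,0,0), (0,1,0), (1,1,0), (0,2,0), (0,0,1)} :
        Set (ℕ × ℕ × ℕ)) → NA1 n1 m1 m2 = 0)
    (NPA2 : ℕ → ℕ → ℕ → ℕ → R)
    (hNPA2_0 : ∀ n1 m1 m2 : ℕ, NPA2 n1 m1 m2 0 =
      2*NA1 n1 m1 m2 + 2*NA1 n1 (m1+1) m2 + 2*NA1 (n1+1) m1 m2)
    (hNPA2_1 : ∀ n1 m1 m2 : ℕ, NPA2 n1 m1 m2 1 =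
      NA1 n1 m1 m2 + 2*NA1 (n1+1) m1 m2 + NA1 (n1+2) m1 m2
      + 3*NA1 n1 (m1+1) m2 + 3*NA1 (n1+1) (m1+1) m2 + 2*NA1 n1 (m1+2) m2)
    (hNPA2_rec : ∀ n1 m1 m2 θ : ℕ, NPA2 n1 m1 m2 (θ+2) =
      NPA2 n1 (m1+1) m2 (θ+1) - NPA2 n1 m1 (m2+1) θ)
    (NPA3 : ℕ → ℕ → ℕ → ℕ → R)
    (hNPA3 : ∀ n1 m1 m2 θ : ℕ, NPA3 n1 m1 m2 θ =
      3*NPA2 n1 m1 m2 (θ+1) + NPA2 n1 m1 m2 θ + NPA2 (n1+1) m1 m2 θ)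
    (NPD4 : ℕ → ℕ → ℕ → ℕ → R)
    (hNPD4 : ∀ n1 m1 m2 θ : ℕ, NPD4 n1 m1 m2 θ =
      2*NPA3 n1 (m1+1) m2 θ - 2*NPA3 n1 m1 m2 (θ+1)
      + NPA3 n1 m1 m2 θ + NPA3 (n1+1) m1 m2 θ)
    (NPD5 : ℕ → ℕ → ℕ → ℕ → R)
    (hNPD5 : ∀ n1 m1 m2 θ : ℕ, NPD5 n1 m1 m2 θ =
      NPD4 n1 m1 m2 (θ+1) + NPD4 n1 (m1+1) m2 θ
      + NPD4 n1 m1 m2 θ + NPD4 (n1+1) m1 m2 θ)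
    (NPE6 : ℕ → ℕ → ℕ → ℕ → R)
    (hNPE6 : ∀ n1 m1 m2 θ : ℕ, NPE6 n1 m1 m2 θ =
      2*NPD5 n1 (m1+1) m2 θ - NPD5 n1 m1 m2 (θ+1)
      + NPD5 (n1+1) m1 m2 θ + NPD5 n1 m1 m2 θ)
    (NPE7 : ℕ → ℕ → ℕ → ℕ → R)
    (hNPE7 : ∀ n1 m1 m2 θ : ℕ, NPE7 n1 m1 m2 θ =
      4*NPE6 n1 m1 m2 (θ+1) + NPE6 n1 m1 m2 θ + NPE6 (n1+1) m1 m2 θ)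
    : NPE7 0 0 0 0 = 252*c1^2 + 488*c1*x1 + 217*x1^2 + 42*x2 :=
  stmt_11_general c1 x1 x2 NA1 hNA1_000 hNA1_100 hNA1_200 hNA1_010 hNA1_110 hNA1_020 hNA1_001
    hNA1_other NPA2 hNPA2_0 hNPA2_1 hNPA2_rec NPA3 hNPA3 NPD4 hNPD4 NPD5 hNPD5 NPE6 hNPE6 NPE7 hNPE7
end

section
/- With R, c1, x1, x2 and the functions NA1, NPA2, NA1A1 as in the context, one has NA1A1(0,0,0) = −42c1^2 + 9c1^4 − 39c1x1 + 12c1^3x1 − 6x1^2 + 4c1^2x1^2 − 7x2 + 6c1^2x2 + 4c1x1x2 + x2^2. (This is the formula of Theorem 1.4 for N(A1A1): the number of curves in the linear system of a sufficiently 4-ample line bundle L on a compact complex surface X that pass through δ_L − 2 generic points and have two distinct simple nodes, where c1 = c1(L), x1 = c1(T*X), x2 = c2(T*X), and N(A1A1) = NA1A1(0,0,0).) -/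
theorem stmt_12_general {R : Type*} [CommRing R] (c1 x1 x2 : R)
    (NA1 : ℕ → ℕ → ℕ → R)
    (hNA1_000 : NA1 0 0 0 = 3*c1^2 + 2*c1*x1 + x2)
    (hNA1_100 : NA1 1 0 0 = 3*c1^2 + c1*x1)
    (hNA1_010 : NA1 0 1 0 = 3*c1*x1 + x1^2)
    (NPA2 : ℕ → ℕ → ℕ → ℕ → R)
    (hNPA2_0 : ∀ n1 m1 m2 : ℕ, NPA2 n1 m1 m2 0 =
      2*NA1 n1 m1 m2 + 2*NA1 n1 (m1+1) m2 + 2*NA1 (n1+1) m1 m2)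
    (NA1A1 : ℕ → ℕ → ℕ → R)
    (hNA1A1 : ∀ n1 m1 m2 : ℕ, NA1A1 n1 m1 m2 =
      NA1 0 0 0 * NA1 n1 m1 m2
      - (NA1 n1 m1 m2 + NA1 (n1+1) m1 m2 + 3*NPA2 n1 m1 m2 0))
    : NA1A1 0 0 0 = -42*c1^2 + 9*c1^4 - 39*c1*x1 + 12*c1^3*x1 - 6*x1^2 + 4*c1^2*x1^2 - 7*x2 + 6*c1^2*x2 + 4*c1*x1*x2 + x2^2 := by
  rw [hNA1A1, hNPA2_0, hNA1_000, hNA1_100, hNA1_010]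
  ring

theorem stmt_12 {R : Type*} [CommRing R] [Algebra ℚ R] (c1 x1 x2 : R)
    (NA1 : ℕ → ℕ → ℕ → R)
    (hNA1_000 : NA1 0 0 0 = 3*c1^2 + 2*c1*x1 + x2)
    (hNA1_100 : NA1 1 0 0 = 3*c1^2 + c1*x1)
    (hNA1_200 : NA1 2 0 0 = c1^2)
    (hNA1_010 : NA1 0 1 0 = 3*c1*x1 + x1^2)
    (hNA1_110 : NA1 1 1 0 = c1*x1)
    (hNA1_020 : NA1 0 2 0 = x1^2)
    (hNA1_001 : NA1 0 0 1 = x2)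
    (hNA1_other : ∀ n1 m1 m2 : ℕ,
      (n1, m1, m2) ∉ ({(0,0,0), (1,0,0), (2,0,0), (0,1,0), (1,1,0), (0,2,0), (0,0,1)} :
        Set (ℕ × ℕ × ℕ)) → NA1 n1 m1 m2 = 0)
    (NPA2 : ℕ → ℕ → ℕ → ℕ → R)
    (hNPA2_0 : ∀ n1 m1 m2 : ℕ, NPA2 n1 m1 m2 0 =
      2*NA1 n1 m1 m2 + 2*NA1 n1 (m1+1) m2 + 2*NA1 (n1+1) m1 m2)
    (hNPA2_1 : ∀ n1 m1 m2 : ℕ, NPA2 n1 m1 m2 1 =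
      NA1 n1 m1 m2 + 2*NA1 (n1+1) m1 m2 + NA1 (n1+2) m1 m2
      + 3*NA1 n1 (m1+1) m2 + 3*NA1 (n1+1) (m1+1) m2 + 2*NA1 n1 (m1+2) m2)
    (hNPA2_rec : ∀ n1 m1 m2 θ : ℕ, NPA2 n1 m1 m2 (θ+2) =
      NPA2 n1 (m1+1) m2 (θ+1) - NPA2 n1 m1 (m2+1) θ)
    (NA1A1 : ℕ → ℕ → ℕ → R)
    (hNA1A1 : ∀ n1 m1 m2 : ℕ, NA1A1 n1 m1 m2 =
      NA1 0 0 0 * NA1 n1 m1 m2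
      - (NA1 n1 m1 m2 + NA1 (n1+1) m1 m2 + 3*NPA2 n1 m1 m2 0))
    : NA1A1 0 0 0 = -42*c1^2 + 9*c1^4 - 39*c1*x1 + 12*c1^3*x1 - 6*x1^2 + 4*c1^2*x1^2 - 7*x2 + 6*c1^2*x2 + 4*c1*x1*x2 + x2^2 :=
  stmt_12_general c1 x1 x2 NA1 hNA1_000 hNA1_100 hNA1_010 NPA2 hNPA2_0 NA1A1 hNA1A1
end

section
/- With R, c1, x1, x2 and the functions NA1, NPA2, NPA3, NPD4, NA1A1, NA1PA2 as in the context, one has NA1PA2(0,0,0,0) = −240c1^2 + 36c1^4 − 288c1x1 + 60c1^3x1 − 72x1^2 + 30c1^2x1^2 + 4c1x1^3 − 24x2 + 18c1^2x2 + 16c1x1x2 + 2x1^2x2 + 2x2^2. (This is the formula of Theorem 1.4 for N(A1A2): the number of curves in the linear system of a sufficiently 5-ample line bundle L on a compact complex surface X that pass through δ_L − 3 generic points and have one simple node and one A2-singularity (cusp), where c1 = c1(L), x1 = c1(T*X), x2 = c2(T*X), and N(A1A2) = NA1PA2(0,0,0,0).) -/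
theorem stmt_13_general {R : Type*} [CommRing R] (c1 x1 x2 : R)
    (NA1 : ℕ → ℕ → ℕ → R)
    (hNA1_000 : NA1 0 0 0 = 3*c1^2 + 2*c1*x1 + x2)
    (hNA1_100 : NA1 1 0 0 = 3*c1^2 + c1*x1)
    (hNA1_200 : NA1 2 0 0 = c1^2)
    (hNA1_010 : NA1 0 1 0 = 3*c1*x1 + x1^2)
    (hNA1_110 : NA1 1 1 0 = c1*x1)
    (hNA1_020 : NA1 0 2 0 = x1^2)
    (NPA2 : ℕ → ℕ → ℕ → ℕ → R)
    (hNPA2_0 : ∀ n1 m1 m2 : ℕ, NPA2 n1 m1 m2 0 =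
      2*NA1 n1 m1 m2 + 2*NA1 n1 (m1+1) m2 + 2*NA1 (n1+1) m1 m2)
    (hNPA2_1 : ∀ n1 m1 m2 : ℕ, NPA2 n1 m1 m2 1 =
      NA1 n1 m1 m2 + 2*NA1 (n1+1) m1 m2 + NA1 (n1+2) m1 m2
      + 3*NA1 n1 (m1+1) m2 + 3*NA1 (n1+1) (m1+1) m2 + 2*NA1 n1 (m1+2) m2)
    (NPA3 : ℕ → ℕ → ℕ → ℕ → R)
    (hNPA3 : ∀ n1 m1 m2 θ : ℕ, NPA3 n1 m1 m2 θ =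
      3*NPA2 n1 m1 m2 (θ+1) + NPA2 n1 m1 m2 θ + NPA2 (n1+1) m1 m2 θ)
    (NA1A1 : ℕ → ℕ → ℕ → R)
    (hNA1A1 : ∀ n1 m1 m2 : ℕ, NA1A1 n1 m1 m2 =
      NA1 0 0 0 * NA1 n1 m1 m2
      - (NA1 n1 m1 m2 + NA1 (n1+1) m1 m2 + 3*NPA2 n1 m1 m2 0))
    (NA1PA2 : ℕ → ℕ → ℕ → ℕ → R)
    (hNA1PA2_0 : ∀ n1 m1 m2 : ℕ, NA1PA2 n1 m1 m2 0 =
      2*NA1A1 n1 m1 m2 + 2*NA1A1 n1 (m1+1) m2 + 2*NA1A1 (n1+1) m1 m2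
      - 2*NPA3 n1 m1 m2 0)
    : NA1PA2 0 0 0 0 = -240*c1^2 + 36*c1^4 - 288*c1*x1 + 60*c1^3*x1 - 72*x1^2 + 30*c1^2*x1^2 + 4*c1*x1^3 - 24*x2 + 18*c1^2*x2 + 16*c1*x1*x2 + 2*x1^2*x2 + 2*x2^2 := by
  have hNPA2_000_0 : NPA2 0 0 0 0 = 12*c1^2 + 12*c1*x1 + 2*x1^2 + 2*x2 := by
    simp only [hNPA2_0, zero_add, hNA1_000, hNA1_010, hNA1_100]; ring
  have hNPA2_100_0 : NPA2 1 0 0 0 = 8*c1^2 + 4*c1*x1 := by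
    simp only [hNPA2_0, zero_add, Nat.reduceAdd, hNA1_100, hNA1_110, hNA1_200]; ring
  have hNPA2_010_0 : NPA2 0 1 0 0 = 8*c1*x1 + 4*x1^2 := by
    simp only [hNPA2_0, zero_add, Nat.reduceAdd, hNA1_010, hNA1_020, hNA1_110]; ring
  have hNPA2_000_1 : NPA2 0 0 0 1 = 10*c1^2 + 16*c1*x1 + 5*x1^2 + x2 := by
    simp only [hNPA2_1, zero_add, hNA1_000, hNA1_100, hNA1_200, hNA1_010, hNA1_110,
      hNA1_020]; ring
  have hNPA3_000_0 : NPA3 0 0 0 0 = 50*c1^2 + 64*c1*x1 + 17*x1^2 + 5*x2 := by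
    rw [hNPA3, zero_add, hNPA2_000_1, hNPA2_000_0, hNPA2_100_0]; ring
  have hNA1A1_000 : NA1A1 0 0 0 =
      (3*c1^2 + 2*c1*x1 + x2)^2 - (42*c1^2 + 39*c1*x1 + 6*x1^2 + 7*x2) := by
    rw [hNA1A1, zero_add, hNPA2_000_0, hNA1_000, hNA1_100]; ring
  have hNA1A1_100 : NA1A1 1 0 0 =
      (3*c1^2 + 2*c1*x1 + x2) * (3*c1^2 + c1*x1) - (28*c1^2 + 13*c1*x1) := by
    rw [hNA1A1, hNPA2_100_0, hNA1_000, hNA1_100, hNA1_200]; ring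
  have hNA1A1_010 : NA1A1 0 1 0 =
      (3*c1^2 + 2*c1*x1 + x2) * (3*c1*x1 + x1^2) - (28*c1*x1 + 13*x1^2) := by
    rw [hNA1A1, zero_add, hNPA2_010_0, hNA1_000, hNA1_010, hNA1_110]; ring
  rw [hNA1PA2_0, zero_add, hNA1A1_000, hNA1A1_010, hNA1A1_100, hNPA3_000_0]
  ring

theorem stmt_13 {R : Type*} [CommRing R] [Algebra ℚ R] (c1 x1 x2 : R)
    (NA1 : ℕ → ℕ → ℕ → R)
    (hNA1_000 : NA1 0 0 0 = 3*c1^2 + 2*c1*x1 + x2)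
    (hNA1_100 : NA1 1 0 0 = 3*c1^2 + c1*x1)
    (hNA1_200 : NA1 2 0 0 = c1^2)
    (hNA1_010 : NA1 0 1 0 = 3*c1*x1 + x1^2)
    (hNA1_110 : NA1 1 1 0 = c1*x1)
    (hNA1_020 : NA1 0 2 0 = x1^2)
    (hNA1_001 : NA1 0 0 1 = x2)
    (hNA1_other : ∀ n1 m1 m2 : ℕ,
      (n1, m1, m2) ∉ ({(0,0,0), (1,0,0), (2,0,0), (0,1,0), (1,1,0), (0,2,0), (0,0,1)} :
        Set (ℕ × ℕ × ℕ)) → NA1 n1 m1 m2 = 0)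
    (NPA2 : ℕ → ℕ → ℕ → ℕ → R)
    (hNPA2_0 : ∀ n1 m1 m2 : ℕ, NPA2 n1 m1 m2 0 =
      2*NA1 n1 m1 m2 + 2*NA1 n1 (m1+1) m2 + 2*NA1 (n1+1) m1 m2)
    (hNPA2_1 : ∀ n1 m1 m2 : ℕ, NPA2 n1 m1 m2 1 =
      NA1 n1 m1 m2 + 2*NA1 (n1+1) m1 m2 + NA1 (n1+2) m1 m2
      + 3*NA1 n1 (m1+1) m2 + 3*NA1 (n1+1) (m1+1) m2 + 2*NA1 n1 (m1+2) m2)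
    (hNPA2_rec : ∀ n1 m1 m2 θ : ℕ, NPA2 n1 m1 m2 (θ+2) =
      NPA2 n1 (m1+1) m2 (θ+1) - NPA2 n1 m1 (m2+1) θ)
    (NPA3 : ℕ → ℕ → ℕ → ℕ → R)
    (hNPA3 : ∀ n1 m1 m2 θ : ℕ, NPA3 n1 m1 m2 θ =
      3*NPA2 n1 m1 m2 (θ+1) + NPA2 n1 m1 m2 θ + NPA2 (n1+1) m1 m2 θ)
    (NPD4 : ℕ → ℕ → ℕ → ℕ → R)
    (hNPD4 : ∀ n1 m1 m2 θ : ℕ, NPD4 n1 m1 m2 θ =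
      2*NPA3 n1 (m1+1) m2 θ - 2*NPA3 n1 m1 m2 (θ+1)
      + NPA3 n1 m1 m2 θ + NPA3 (n1+1) m1 m2 θ)
    (NA1A1 : ℕ → ℕ → ℕ → R)
    (hNA1A1 : ∀ n1 m1 m2 : ℕ, NA1A1 n1 m1 m2 =
      NA1 0 0 0 * NA1 n1 m1 m2
      - (NA1 n1 m1 m2 + NA1 (n1+1) m1 m2 + 3*NPA2 n1 m1 m2 0))
    (NA1PA2 : ℕ → ℕ → ℕ → ℕ → R)
    (hNA1PA2_0 : ∀ n1 m1 m2 : ℕ, NA1PA2 n1 m1 m2 0 =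
      2*NA1A1 n1 m1 m2 + 2*NA1A1 n1 (m1+1) m2 + 2*NA1A1 (n1+1) m1 m2
      - 2*NPA3 n1 m1 m2 0)
    (hNA1PA2_1 : ∀ n1 m1 m2 : ℕ, NA1PA2 n1 m1 m2 1 =
      NA1A1 n1 m1 m2 + 2*NA1A1 (n1+1) m1 m2 + NA1A1 (n1+2) m1 m2
      + 3*NA1A1 n1 (m1+1) m2 + 3*NA1A1 (n1+1) (m1+1) m2 + 2*NA1A1 n1 (m1+2) m2
      - 2*NPA3 n1 m1 m2 1 - NPD4 n1 m1 m2 0)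
    (hNA1PA2_rec : ∀ n1 m1 m2 θ : ℕ, NA1PA2 n1 m1 m2 (θ+2) =
      NA1PA2 n1 (m1+1) m2 (θ+1) - NA1PA2 n1 m1 (m2+1) θ)
    : NA1PA2 0 0 0 0 = -240*c1^2 + 36*c1^4 - 288*c1*x1 + 60*c1^3*x1 - 72*x1^2 + 30*c1^2*x1^2 + 4*c1*x1^3 - 24*x2 + 18*c1^2*x2 + 16*c1*x1*x2 + 2*x1^2*x2 + 2*x2^2 :=
  stmt_13_general c1 x1 x2 NA1 hNA1_000 hNA1_100 hNA1_200 hNA1_010 hNA1_110 hNA1_020 NPA2 hNPA2_0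
    hNPA2_1 NPA3 hNPA3 NA1A1 hNA1A1 NA1PA2 hNA1PA2_0
end
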